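/- Let (E, ‖·‖) be a complete L^∞-normed module (complete with respect to the norm ‖·‖_∞ given by the essential supremum of ‖·‖), and let (E_0, ‖·‖_0) be its L^0-extension random normed module. Then every x ∈ E_0 can be written as x = Σ_{k} Ĩ_{A_k} y_k for some sequence {y_k} in E and countable measurable partition {A_k} of Ω; that is, E_0 = H^0_cc(E). -/

import Mathlib

/-!
Approximate `z` by `T xₘ` with `d(T xₘ, z) < 4⁻ᵐ`. Markov's inequality bounds the probability of
`‖xₘ - xₘ₊₁‖ > 2⁻ᵐ` by `2 · 2⁻ᵐ`, so by Borel–Cantelli almost every `ω` lies in one of the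
measurable sets `B_N` on which `‖xₘ - xₘ₊₁‖ ≤ 2⁻ᵐ` for all `m ≥ N`. On a measurable `D ⊆ B_N`
the sequence `Ĩ_D xₘ` is Cauchy for `‖·‖_∞`, hence converges in `E` to some `y`, and
`Ĩ_D z = Ĩ_D T y`. Disjointifying the `B_N` gives the partition.
-/
open MeasureTheory Filter
noncomputable section

variable {Ω : Type} [MeasurableSpace Ω] {μ : Measure Ω}

/-- `L⁰(𝓕)`: equivalence classes of random variables, as a commutative ring. -/
instance : NatCast (Ω →ₘ[μ] ℝ) := ⟨fun n => AEEqFun.const Ω (n : ℝ)⟩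
instance : IntCast (Ω →ₘ[μ] ℝ) := ⟨fun n => AEEqFun.const Ω (n : ℝ)⟩
instance : CommRing (Ω →ₘ[μ] ℝ) :=
  AEEqFun.toGerm_injective.commRing AEEqFun.toGerm AEEqFun.zero_toGerm AEEqFun.one_toGerm
    AEEqFun.add_toGerm AEEqFun.mul_toGerm AEEqFun.neg_toGerm AEEqFun.sub_toGerm
    (fun _ _ => AEEqFun.smul_toGerm _ _) (fun _ _ => AEEqFun.smul_toGerm _ _)
    AEEqFun.pow_toGerm (fun _ => rfl) (fun _ => rfl)

/-- `L^∞(𝓕)`: the subring of essentially bounded random variables. -/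
def Linf (μ : Measure Ω) : Subring (Ω →ₘ[μ] ℝ) where
  carrier := {ξ | ∃ c : ℝ, ∀ᵐ ω ∂μ, |ξ ω| ≤ c}
  zero_mem' := ⟨0, by filter_upwards [AEEqFun.coeFn_zero (β := ℝ) (μ := μ)] with ω h; simp [h]⟩
  one_mem' := ⟨1, by filter_upwards [AEEqFun.coeFn_one (β := ℝ) (μ := μ)] with ω h; simp [h]⟩
  add_mem' := by
    rintro a b ⟨c, hc⟩ ⟨d, hd⟩
    exact ⟨c + d, by
      filter_upwards [AEEqFun.coeFn_add a b, hc, hd] with ω h1 h2 h3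
      calc |(a + b) ω| = |a ω + b ω| := by rw [h1]; rfl
        _ ≤ |a ω| + |b ω| := abs_add_le _ _
        _ ≤ c + d := add_le_add h2 h3⟩
  mul_mem' := by
    rintro a b ⟨c, hc⟩ ⟨d, hd⟩
    exact ⟨|c| * |d|, by
      filter_upwards [AEEqFun.coeFn_mul a b, hc, hd] with ω h1 h2 h3
      calc |(a * b) ω| = |a ω * b ω| := by rw [h1]; rfl
        _ = |a ω| * |b ω| := abs_mul _ _
        _ ≤ |c| * |d| :=
            mul_le_mul (h2.trans (le_abs_self c)) (h3.trans (le_abs_self d))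
              (abs_nonneg _) (abs_nonneg _)⟩
  neg_mem' := by
    rintro a ⟨c, hc⟩
    exact ⟨c, by
      filter_upwards [AEEqFun.coeFn_neg a, hc] with ω h1 h2
      calc |(-a) ω| = |-(a ω)| := by rw [h1]; rfl
        _ = |a ω| := abs_neg _
        _ ≤ c := h2⟩

/-- the constant `c`, as an element of `L^∞`. -/
def LinfConst (μ : Measure Ω) (c : ℝ) : Linf μ :=
  ⟨AEEqFun.const Ω c, |c|, by
    filter_upwards [AEEqFun.coeFn_const (α := Ω) (μ := μ) c] with ω h
    simp [h, Function.const]⟩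

/-- the equivalence class `Ĩ_A` of the indicator function of a set `A`. -/
def indL0 (μ : Measure Ω) (A : Set Ω) (hA : MeasurableSet A) : Ω →ₘ[μ] ℝ :=
  AEEqFun.mk (A.indicator (1 : Ω → ℝ)) ((measurable_const.indicator hA).aestronglyMeasurable)

/-- a countable measurable partition of `Ω`. -/
structure MPartition (Ω : Type) [MeasurableSpace Ω] where
  A : ℕ → Set Ω
  meas : ∀ k, MeasurableSet (A k)
  disj : ∀ m k, m ≠ k → A m ∩ A k = ∅
  cover : (⋃ k, A k) = Set.univ

/-- `Ĩ_{A_k}` for a member of a countable measurable partition. -/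
def MPartition.ind (P : MPartition Ω) (μ : Measure Ω) (k : ℕ) : Ω →ₘ[μ] ℝ :=
  indL0 μ (P.A k) (P.meas k)

/-- `‖·‖` is an `L⁰`-norm making the `L⁰`-module `S` a random normed module. -/
structure IsRNNorm (μ : Measure Ω) {S : Type} [AddCommGroup S]
    [Module (Ω →ₘ[μ] ℝ) S] (n : S → Ω →ₘ[μ] ℝ) : Prop where
  nonneg : ∀ x, 0 ≤ n x
  eq_zero_iff : ∀ x, n x = 0 ↔ x = 0
  norm_smul : ∀ (ξ : Ω →ₘ[μ] ℝ) (x : S), n (ξ • x) = |ξ| * n x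
  norm_add_le : ∀ x y, n (x + y) ≤ n x + n y

/-- `‖·‖` is an `L^∞`-norm making the `L^∞`-module `E` an `L^∞`-normed module. -/
structure IsLinfNorm (μ : Measure Ω) {E : Type} [AddCommGroup E]
    [Module (Linf μ) E] (n : E → Ω →ₘ[μ] ℝ) : Prop where
  nonneg : ∀ x, 0 ≤ n x
  mem_Linf : ∀ x, n x ∈ Linf μ
  eq_zero_iff : ∀ x, n x = 0 ↔ x = 0
  norm_smul : ∀ (ξ : Linf μ) (x : E), n (ξ • x) = |(ξ : Ω →ₘ[μ] ℝ)| * n x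
  norm_add_le : ∀ x y, n (x + y) ≤ n x + n y

/-- the metric `d(x,y) = E[1 ∧ ‖x-y‖]` associated to an `L⁰`- (or `L^∞`-) norm. -/
def ndist {S : Type} [AddCommGroup S] (μ : Measure Ω) (n : S → Ω →ₘ[μ] ℝ) (x y : S) : ℝ :=
  ∫ ω, min 1 |n (x - y) ω| ∂μ

/-- the distance of convergence in probability on `L⁰`. -/
def dProb (μ : Measure Ω) (ξ η : Ω →ₘ[μ] ℝ) : ℝ := ∫ ω, min 1 |ξ ω - η ω| ∂μ

/-- Cauchy property of a sequence with respect to a distance function. -/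
def dCauchy {S : Type} (d : S → S → ℝ) (x : ℕ → S) : Prop :=
  ∀ ε > (0:ℝ), ∃ N : ℕ, ∀ m ≥ N, ∀ k ≥ N, d (x m) (x k) < ε

/-- convergence of a sequence with respect to a distance function. -/
def dTendsto {S : Type} (d : S → S → ℝ) (x : ℕ → S) (y : S) : Prop :=
  Tendsto (fun k => d (x k) y) atTop (nhds 0)

/-- completeness with respect to a distance function. -/
def dComplete {S : Type} (d : S → S → ℝ) : Prop :=
  ∀ x : ℕ → S, dCauchy d x → ∃ y, dTendsto d x y

/-- a bundled complete-or-not random normed module over `L⁰(𝓕)`. -/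
structure RNMod (Ω : Type) [MeasurableSpace Ω] (μ : Measure Ω) where
  carrier : Type
  acg : AddCommGroup carrier
  mod : @Module (Ω →ₘ[μ] ℝ) carrier _ acg.toAddCommMonoid
  rnorm : carrier → Ω →ₘ[μ] ℝ
  isRNNorm : IsRNNorm μ rnorm

attribute [instance] RNMod.acg RNMod.mod

/-- the metric of the `(ε,λ)`-topology of a random normed module. -/
def RNMod.dist (S : RNMod Ω μ) : S.carrier → S.carrier → ℝ := ndist μ S.rnorm

/-- completeness of a random normed module in the `(ε,λ)`-topology. -/
def RNMod.Complete (S : RNMod Ω μ) : Prop := dComplete S.dist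

/-- the essential supremum `‖ξ‖_∞` of (the absolute value of) a random variable. -/
def NinfV (μ : Measure Ω) (ξ : Ω →ₘ[μ] ℝ) : ℝ := essSup (fun ω => |ξ ω|) μ

/-- `T` is an `L^∞`-module homomorphism from `E` into (the `L^∞`-module underlying) `S`. -/
def IsLinfModHom (μ : Measure Ω) {E S : Type} [AddCommGroup E] [Module (Linf μ) E]
    [AddCommGroup S] [Module (Ω →ₘ[μ] ℝ) S] (T : E → S) : Prop :=
  (∀ x y, T (x + y) = T x + T y) ∧
  (∀ (ξ : Linf μ) (x : E), T (ξ • x) = ((ξ : Ω →ₘ[μ] ℝ)) • T x)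

/-- `S` together with `T` is an `L⁰`-extension of the `L^∞`-normed module `(E, n)`:
`S` is a complete random normed module, `T` is a norm-preserving `L^∞`-module
homomorphism with dense range. -/
def IsL0Extension (μ : Measure Ω) {E : Type} [AddCommGroup E] [Module (Linf μ) E]
    (n : E → Ω →ₘ[μ] ℝ) (S : RNMod Ω μ) (T : E → S.carrier) : Prop :=
  S.Complete ∧ IsLinfModHom μ T ∧ (∀ x, S.rnorm (T x) = n x) ∧
  (∀ y : S.carrier, ∀ ε > (0:ℝ), ∃ x : E, S.dist (T x) y < ε)

/-- the set of elements of an `L⁰`-normed module with essentially bounded norm. -/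
def LinfPart (μ : Measure Ω) {S : Type} (n : S → Ω →ₘ[μ] ℝ) : Set S := {x | n x ∈ Linf μ}

/-- convergence in probability of a sequence of random variables. -/
def TendstoInProb (μ : Measure Ω) (ξ : ℕ → Ω →ₘ[μ] ℝ) (l : Ω →ₘ[μ] ℝ) : Prop :=
  Tendsto (fun k => dProb μ (ξ k) l) atTop (nhds 0)

/-- the countable concatenation hull `H⁰_cc(E)` of a subset `E` of a random normed module. -/
def Hcc (S : RNMod Ω μ) (E : Set S.carrier) : Set S.carrier :=
  {z | ∃ (x : ℕ → S.carrier) (P : MPartition Ω),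
    (∀ k, x k ∈ E) ∧ ∀ k, P.ind μ k • z = P.ind μ k • x k}

/-- `L(E) = L⁰ * E`, the set of `L⁰`-multiples of elements of `E`. -/
def Lgen (S : RNMod Ω μ) (E : Set S.carrier) : Set S.carrier :=
  {z | ∃ (ξ : Ω →ₘ[μ] ℝ) (x : S.carrier), x ∈ E ∧ z = ξ • x}

/-- `f` is a continuous `L^∞`-module homomorphism from `(E, n)` to `L^∞`, i.e. a member of
the dual `L^∞`-normed module `E′`. -/
def IsLinfDual (μ : Measure Ω) {E : Type} [AddCommGroup E] [Module (Linf μ) E]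
    (n : E → Ω →ₘ[μ] ℝ) (f : E → Ω →ₘ[μ] ℝ) : Prop :=
  (∀ x, f x ∈ Linf μ) ∧ (∀ x y, f (x + y) = f x + f y) ∧
  (∀ (ξ : Linf μ) (x : E), f (ξ • x) = (ξ : Ω →ₘ[μ] ℝ) * f x) ∧
  (∀ ε > (0:ℝ), ∃ δ > (0:ℝ), ∀ x, NinfV μ (n x) < δ → NinfV μ (f x) < ε)

/-- `g` is a continuous `L⁰`-module homomorphism from `S` to `L⁰`, i.e. a member of the
random conjugate space `S^*`. -/
def IsRNDual (μ : Measure Ω) (S : RNMod Ω μ) (g : S.carrier → Ω →ₘ[μ] ℝ) : Prop :=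
  (∀ x y, g (x + y) = g x + g y) ∧ (∀ (ξ : Ω →ₘ[μ] ℝ) x, g (ξ • x) = ξ * g x) ∧
  (∀ ε > (0:ℝ), ∃ δ > (0:ℝ), ∀ x, ndist μ S.rnorm x 0 < δ → dProb μ (g x) 0 < ε)

/-- the set `{|f(x)| : ‖x‖ ≤ 1}` whose supremum in the lattice `L⁰` is the dual norm `‖f‖′`. -/
def dualBall {X : Type} (n : X → Ω →ₘ[μ] ℝ) (f : X → Ω →ₘ[μ] ℝ) : Set (Ω →ₘ[μ] ℝ) :=
  {t | ∃ x, n x ≤ 1 ∧ t = |f x|}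

lemma MeasureTheory.AEEqFun.ae_nonneg {ξ : Ω →ₘ[μ] ℝ} (h : 0 ≤ ξ) : ∀ᵐ ω ∂μ, 0 ≤ ξ ω := by
  filter_upwards [AEEqFun.coeFn_le.2 h, AEEqFun.coeFn_zero (β := ℝ) (μ := μ)] with ω h1 h2
  rwa [h2] at h1

lemma MeasureTheory.AEEqFun.abs_neg_one : |(-1 : Ω →ₘ[μ] ℝ)| = 1 := by
  apply AEEqFun.ext
  filter_upwards [AEEqFun.coeFn_abs (-1 : Ω →ₘ[μ] ℝ), AEEqFun.coeFn_neg (1 : Ω →ₘ[μ] ℝ),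
    AEEqFun.coeFn_one (β := ℝ) (μ := μ)] with ω h1 h2 h3
  rw [h1, h2]
  simp [h3]

lemma min_one_le_add {a b c : ℝ} (hb : 0 ≤ b) (hc : 0 ≤ c) (h : a ≤ b + c) :
    min 1 a ≤ min 1 b + min 1 c := by
  simp only [min_def]
  split_ifs <;> linarith

lemma integrable_min_one_abs [IsFiniteMeasure μ] (ξ : Ω →ₘ[μ] ℝ) :
    Integrable (fun ω => min 1 |ξ ω|) μ := by
  refine (integrable_const (1 : ℝ)).mono'
    ((continuous_const.min continuous_abs).comp_aestronglyMeasurable ξ.aestronglyMeasurable)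
    (Eventually.of_forall fun ω => ?_)
  rw [Real.norm_eq_abs, abs_of_nonneg (le_min zero_le_one (abs_nonneg _))]
  exact min_le_left _ _

lemma NinfV_le_of_ae_le [NeZero μ] {ξ : Ω →ₘ[μ] ℝ} {c : ℝ} (hc : ∀ᵐ ω ∂μ, |ξ ω| ≤ c) :
    NinfV μ ξ ≤ c :=
  limsup_le_of_le (IsBoundedUnder.isCoboundedUnder_le
    ⟨0, eventually_map.2 (Eventually.of_forall fun _ => abs_nonneg _)⟩) hc

lemma ae_le_NinfV {ξ : Ω →ₘ[μ] ℝ} (hξ : ξ ∈ Linf μ) : ∀ᵐ ω ∂μ, |ξ ω| ≤ NinfV μ ξ := by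
  obtain ⟨c, hc⟩ := hξ
  exact ae_le_essSup ⟨c, eventually_map.2 hc⟩

lemma NinfV_zero [NeZero μ] : NinfV μ (0 : Ω →ₘ[μ] ℝ) = 0 := by
  have h : (fun ω => |(0 : Ω →ₘ[μ] ℝ) ω|) =ᵐ[μ] fun _ => (0 : ℝ) := by
    filter_upwards [AEEqFun.coeFn_zero (β := ℝ) (μ := μ)] with ω h
    simp [h]
  rw [NinfV, essSup_congr_ae h, essSup_const _ (NeZero.ne μ)]

namespace RNMod

variable (S : RNMod Ω μ)

lemma rnorm_neg (w : S.carrier) : S.rnorm (-w) = S.rnorm w := by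
  rw [← neg_one_smul (Ω →ₘ[μ] ℝ) w, S.isRNNorm.norm_smul, AEEqFun.abs_neg_one, one_mul]

lemma dist_nonneg (a b : S.carrier) : 0 ≤ S.dist a b :=
  integral_nonneg fun _ => le_min zero_le_one (abs_nonneg _)

lemma dist_comm (a b : S.carrier) : S.dist a b = S.dist b a := by
  simp only [RNMod.dist, ndist]
  rw [← neg_sub b a, rnorm_neg]

variable [IsFiniteMeasure μ]

lemma dist_triangle (a b c : S.carrier) : S.dist a c ≤ S.dist a b + S.dist b c := by
  have hle := S.isRNNorm.norm_add_le (a - b) (b - c)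
  rw [sub_add_sub_cancel] at hle
  have key : (fun ω => min 1 |S.rnorm (a - c) ω|) ≤ᵐ[μ]
      fun ω => min 1 |S.rnorm (a - b) ω| + min 1 |S.rnorm (b - c) ω| := by
    filter_upwards [AEEqFun.coeFn_le.2 hle, AEEqFun.coeFn_add (S.rnorm (a - b)) (S.rnorm (b - c)),
      AEEqFun.ae_nonneg (S.isRNNorm.nonneg (a - c)), AEEqFun.ae_nonneg (S.isRNNorm.nonneg (a - b)),
      AEEqFun.ae_nonneg (S.isRNNorm.nonneg (b - c))] with ω h hadd h0 h1 h2
    rw [hadd] at h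
    rw [abs_of_nonneg h0, abs_of_nonneg h1, abs_of_nonneg h2]
    exact min_one_le_add h1 h2 h
  calc S.dist a c ≤ ∫ ω, (min 1 |S.rnorm (a - b) ω| + min 1 |S.rnorm (b - c) ω|) ∂μ :=
        integral_mono_ae (integrable_min_one_abs _)
          ((integrable_min_one_abs _).add (integrable_min_one_abs _)) key
    _ = S.dist a b + S.dist b c :=
        integral_add (integrable_min_one_abs _) (integrable_min_one_abs _)

lemma eq_of_dist_eq_zero {a b : S.carrier} (h : S.dist a b = 0) : a = b := by
  have h0 : (fun ω => min 1 |S.rnorm (a - b) ω|) =ᵐ[μ] 0 :=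
    (integral_eq_zero_iff_of_nonneg (fun _ => le_min zero_le_one (abs_nonneg _))
      (integrable_min_one_abs _)).1 h
  have hzero : S.rnorm (a - b) = 0 := by
    apply AEEqFun.ext
    filter_upwards [h0, AEEqFun.coeFn_zero (β := ℝ) (μ := μ)] with ω h1 h2
    rw [h2]
    exact abs_eq_zero.1 ((min_eq_iff.1 h1).resolve_left fun h => one_ne_zero h.1).1
  exact sub_eq_zero.1 ((S.isRNNorm.eq_zero_iff _).1 hzero)

lemma eq_of_tendsto_dist {a b : S.carrier} {w : ℕ → S.carrier}
    (ha : Tendsto (fun k => S.dist a (w k)) atTop (nhds 0))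
    (hb : Tendsto (fun k => S.dist (w k) b) atTop (nhds 0)) : a = b := by
  refine S.eq_of_dist_eq_zero (le_antisymm ?_ (S.dist_nonneg a b))
  simpa using ge_of_tendsto' (ha.add hb) fun k => S.dist_triangle a (w k) b

lemma dist_le_of_ae_le [IsProbabilityMeasure μ] {a b : S.carrier} {c : ℝ}
    (h : ∀ᵐ ω ∂μ, |S.rnorm (a - b) ω| ≤ c) : S.dist a b ≤ c := by
  have hle : S.dist a b ≤ ∫ _, c ∂μ := by
    refine integral_mono_ae (integrable_min_one_abs _) (integrable_const _) ?_
    filter_upwards [h] with ω hω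
    exact (min_le_right _ _).trans hω
  simpa using hle

lemma measure_lt_abs_rnorm_le {a b : S.carrier} {t : ℝ} (ht : 0 < t) (ht1 : t ≤ 1) :
    μ {ω | t < |S.rnorm (a - b) ω|} ≤ ENNReal.ofReal (S.dist a b / t) := by
  have hsub : {ω | t < |S.rnorm (a - b) ω|} ⊆ {ω | t ≤ min 1 |S.rnorm (a - b) ω|} :=
    fun ω hω => le_min ht1 (le_of_lt hω)
  have hmarkov := mul_meas_ge_le_integral_of_nonneg
    (Eventually.of_forall fun ω => le_min zero_le_one (abs_nonneg _))
    (integrable_min_one_abs (S.rnorm (a - b))) t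
  calc μ {ω | t < |S.rnorm (a - b) ω|}
      ≤ μ {ω | t ≤ min 1 |S.rnorm (a - b) ω|} := measure_mono hsub
    _ = ENNReal.ofReal (μ.real {ω | t ≤ min 1 |S.rnorm (a - b) ω|}) := by
        rw [ofReal_measureReal]
    _ ≤ ENNReal.ofReal (S.dist a b / t) := by
        gcongr
        rw [le_div_iff₀ ht, mul_comm]
        exact hmarkov

end RNMod

section Indicator

variable {D : Set Ω} (hD : MeasurableSet D)

lemma indL0_ae_eq_indicator : ⇑(indL0 μ D hD) =ᵐ[μ] D.indicator 1 := AEEqFun.coeFn_mk _ _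

lemma indL0_mul_self : indL0 μ D hD * indL0 μ D hD = indL0 μ D hD := by
  apply AEEqFun.ext
  filter_upwards [AEEqFun.coeFn_mul (indL0 μ D hD) (indL0 μ D hD), indL0_ae_eq_indicator hD]
    with ω hmul hind
  rw [hmul, Pi.mul_apply, hind]
  by_cases hω : ω ∈ D <;> simp [hω]

lemma ae_abs_abs_indL0_mul_eq (ξ : Ω →ₘ[μ] ℝ) :
    ∀ᵐ ω ∂μ, |(|indL0 μ D hD| * ξ) ω| = D.indicator (fun ω => |ξ ω|) ω := by
  filter_upwards [AEEqFun.coeFn_mul |indL0 μ D hD| ξ, AEEqFun.coeFn_abs (indL0 μ D hD),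
    indL0_ae_eq_indicator hD] with ω hmul habs hind
  rw [hmul, Pi.mul_apply, habs, hind]
  by_cases hω : ω ∈ D <;> simp [hω]

lemma RNMod.dist_indL0_smul_le [IsFiniteMeasure μ] (S : RNMod Ω μ) (a b : S.carrier) :
    S.dist (indL0 μ D hD • a) (indL0 μ D hD • b) ≤ S.dist a b := by
  refine integral_mono_ae (integrable_min_one_abs _) (integrable_min_one_abs _) ?_
  filter_upwards [ae_abs_abs_indL0_mul_eq hD (S.rnorm (a - b))] with ω h
  rw [← smul_sub, S.isRNNorm.norm_smul, h]
  gcongr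
  exact Set.indicator_le_self' (fun _ _ => abs_nonneg _) ω

end Indicator

def indLinf (μ : Measure Ω) (D : Set Ω) (hD : MeasurableSet D) : Linf μ :=
  ⟨indL0 μ D hD, 1, by
    filter_upwards [indL0_ae_eq_indicator hD] with ω h
    by_cases hω : ω ∈ D <;> simp [h, hω]⟩

namespace IsLinfNorm

variable {E : Type} [AddCommGroup E] [Module (Linf μ) E] {n : E → Ω →ₘ[μ] ℝ}

lemma map_zero (hn : IsLinfNorm μ n) : n 0 = 0 := (hn.eq_zero_iff 0).2 rfl

lemma map_neg (hn : IsLinfNorm μ n) (x : E) : n (-x) = n x := by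
  rw [← neg_one_smul (Linf μ) x, hn.norm_smul]
  exact (congrArg (· * n x) AEEqFun.abs_neg_one).trans (one_mul _)

lemma NinfV_sub_comm (hn : IsLinfNorm μ n) (a b : E) :
    NinfV μ (n (a - b)) = NinfV μ (n (b - a)) := by
  rw [← neg_sub b a, hn.map_neg]

lemma NinfV_sub_self [NeZero μ] (hn : IsLinfNorm μ n) (a : E) : NinfV μ (n (a - a)) = 0 := by
  rw [sub_self, hn.map_zero, NinfV_zero]

lemma NinfV_sub_le [NeZero μ] (hn : IsLinfNorm μ n) (a b c : E) :
    NinfV μ (n (a - c)) ≤ NinfV μ (n (a - b)) + NinfV μ (n (b - c)) := by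
  have hle := hn.norm_add_le (a - b) (b - c)
  rw [sub_add_sub_cancel] at hle
  apply NinfV_le_of_ae_le
  filter_upwards [AEEqFun.coeFn_le.2 hle, AEEqFun.coeFn_add (n (a - b)) (n (b - c)),
    AEEqFun.ae_nonneg (hn.nonneg (a - c)), ae_le_NinfV (hn.mem_Linf (a - b)),
    ae_le_NinfV (hn.mem_Linf (b - c))] with ω h hadd h0 h1 h2
  rw [hadd] at h
  rw [abs_of_nonneg h0]
  exact h.trans (add_le_add ((le_abs_self _).trans h1) ((le_abs_self _).trans h2))

end IsLinfNorm

lemma IsLinfModHom.map_sub {E S : Type} [AddCommGroup E] [Module (Linf μ) E] [AddCommGroup S]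
    [Module (Ω →ₘ[μ] ℝ) S] {T : E → S} (hT : IsLinfModHom μ T) (a b : E) :
    T (a - b) = T a - T b := by
  have hneg : T (-b) = -T b := by
    rw [← neg_one_smul (Linf μ) b, hT.2]
    exact neg_one_smul _ _
  rw [sub_eq_add_neg, hT.1, hneg, sub_eq_add_neg]

lemma dCauchy_of_le_geometric_two {X : Type} {d : X → X → ℝ}
    (hself : ∀ a, d a a = 0) (hcomm : ∀ a b, d a b = d b a)
    (htri : ∀ a b c, d a c ≤ d a b + d b c) {v : ℕ → X}
    (hv : ∀ j, d (v j) (v (j + 1)) ≤ 2⁻¹ ^ j) : dCauchy d v := by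
  have hchain : ∀ m l, d (v m) (v (m + l)) ≤ 2 * 2⁻¹ ^ m - 2 * 2⁻¹ ^ (m + l) := by
    intro m l
    induction l with
    | zero => simp [hself]
    | succ l ih =>
      calc d (v m) (v (m + (l + 1))) ≤ d (v m) (v (m + l)) + d (v (m + l)) (v (m + l + 1)) :=
            htri _ _ _
        _ ≤ 2 * 2⁻¹ ^ m - 2 * 2⁻¹ ^ (m + l) + 2⁻¹ ^ (m + l) := add_le_add ih (hv _)
        _ = 2 * 2⁻¹ ^ m - 2 * 2⁻¹ ^ (m + (l + 1)) := by ring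
  intro ε hε
  obtain ⟨M, hM⟩ := exists_pow_lt_of_lt_one (half_pos hε) (by norm_num : (2⁻¹ : ℝ) < 1)
  refine ⟨M, fun m hm k hk => ?_⟩
  wlog hmk : m ≤ k generalizing m k
  · rw [hcomm]
    exact this k hk m hm (le_of_not_ge hmk)
  obtain ⟨l, rfl⟩ := Nat.exists_eq_add_of_le hmk
  have hpow : (2⁻¹ : ℝ) ^ m ≤ 2⁻¹ ^ M := pow_le_pow_of_le_one (by norm_num) (by norm_num) hm
  have hpos : (0 : ℝ) < 2⁻¹ ^ (m + l) := by positivity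
  linarith [hchain m l]

lemma exists_mpartition_ae_subset {B : ℕ → Set Ω} (hB : ∀ k, MeasurableSet (B k))
    (hcover : ∀ᵐ ω ∂μ, ∃ k, ω ∈ B k) :
    ∃ P : MPartition Ω, ∀ k, ∀ᵐ ω ∂μ, ω ∈ P.A k → ω ∈ B k := by
  set B' : ℕ → Set Ω := fun k => B k ∪ (⋃ i, B i)ᶜ
  have hcover' : ⋃ k, B' k = Set.univ := by
    refine Set.eq_univ_of_forall fun ω => ?_
    by_cases h : ω ∈ ⋃ i, B i
    · obtain ⟨i, hi⟩ := Set.mem_iUnion.1 h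
      exact Set.mem_iUnion.2 ⟨i, Or.inl hi⟩
    · exact Set.mem_iUnion.2 ⟨0, Or.inr h⟩
  refine ⟨⟨disjointed B', MeasurableSet.disjointed fun k => (hB k).union (.compl (.iUnion hB)),
    fun m k hmk => Set.disjoint_iff_inter_eq_empty.1 (disjoint_disjointed B' hmk),
    iUnion_disjointed.trans hcover'⟩, fun k => ?_⟩
  filter_upwards [hcover] with ω ⟨i, hi⟩ hω
  exact (disjointed_subset B' k hω).resolve_right fun h => h (Set.mem_iUnion.2 ⟨i, hi⟩)

lemma RNMod.ae_eventually_abs_rnorm_sub_le [IsFiniteMeasure μ] (S : RNMod Ω μ) {z : S.carrier}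
    {w : ℕ → S.carrier} (hw : ∀ m, S.dist (w m) z < 4⁻¹ ^ m) :
    ∀ᵐ ω ∂μ, ∀ᶠ m in atTop, |S.rnorm (w m - w (m + 1)) ω| ≤ 2⁻¹ ^ m := by
  have hstep : ∀ m, S.dist (w m) (w (m + 1)) ≤ 2 * 2⁻¹ ^ m * 2⁻¹ ^ m := by
    intro m
    have hsucc : (4⁻¹ : ℝ) ^ (m + 1) ≤ 4⁻¹ ^ m :=
      pow_le_pow_of_le_one (by norm_num) (by norm_num) m.le_succ
    calc S.dist (w m) (w (m + 1)) ≤ S.dist (w m) z + S.dist (w (m + 1)) z := by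
          rw [S.dist_comm (w (m + 1))]; exact S.dist_triangle _ _ _
      _ ≤ 4⁻¹ ^ m + 4⁻¹ ^ m := add_le_add (hw m).le ((hw (m + 1)).le.trans hsucc)
      _ = 2 * 2⁻¹ ^ m * 2⁻¹ ^ m := by rw [mul_assoc, ← mul_pow]; norm_num; ring
  have hmarkov : ∀ m, μ {ω | 2⁻¹ ^ m < |S.rnorm (w m - w (m + 1)) ω|}
      ≤ ENNReal.ofReal (2 * 2⁻¹ ^ m) := fun m =>
    (S.measure_lt_abs_rnorm_le (by positivity) (pow_le_one₀ (by norm_num) (by norm_num))).trans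
      (ENNReal.ofReal_le_ofReal ((div_le_iff₀ (by positivity)).2 (hstep m)))
  have hsum : ∑' m, μ {ω | 2⁻¹ ^ m < |S.rnorm (w m - w (m + 1)) ω|} ≠ ⊤ := by
    refine ne_top_of_le_ne_top ?_ (ENNReal.tsum_le_tsum hmarkov)
    rw [← ENNReal.ofReal_tsum_of_nonneg (fun m => by positivity)
      ((summable_geometric_of_lt_one (by norm_num) (by norm_num)).mul_left 2)]
    exact ENNReal.ofReal_ne_top
  filter_upwards [ae_eventually_notMem hsum] with ω hω
  exact hω.mono fun m hm => not_lt.1 hm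

lemma exists_indL0_smul_eq_smul_of_ae_abs_le [IsProbabilityMeasure μ] {E : Type}
    [AddCommGroup E] [Module (Linf μ) E] {n : E → Ω →ₘ[μ] ℝ} (hn : IsLinfNorm μ n)
    (hcomp : dComplete (fun x y : E => NinfV μ (n (x - y)))) (S : RNMod Ω μ) {T : E → S.carrier}
    (hT : IsLinfModHom μ T) (hTn : ∀ x, S.rnorm (T x) = n x) {z : S.carrier} {x : ℕ → E}
    (hx : Tendsto (fun m => S.dist (T (x m)) z) atTop (nhds 0)) {D : Set Ω}
    (hD : MeasurableSet D) {N : ℕ}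
    (hxD : ∀ᵐ ω ∂μ, ω ∈ D → ∀ m ≥ N, |n (x m - x (m + 1)) ω| ≤ 2⁻¹ ^ m) :
    ∃ y : E, indL0 μ D hD • z = indL0 μ D hD • T y := by
  set v : ℕ → E := fun j => indLinf μ D hD • x (N + j)
  have hstep : ∀ j, NinfV μ (n (v j - v (j + 1))) ≤ 2⁻¹ ^ j := by
    intro j
    rw [← smul_sub, hn.norm_smul]
    change NinfV μ (|indL0 μ D hD| * n (x (N + j) - x (N + j + 1))) ≤ _
    apply NinfV_le_of_ae_le
    filter_upwards [ae_abs_abs_indL0_mul_eq hD (n (x (N + j) - x (N + j + 1))), hxD]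
      with ω hind hω
    rw [hind]
    by_cases hωD : ω ∈ D
    · rw [Set.indicator_of_mem hωD]
      exact (hω hωD (N + j) (N.le_add_right j)).trans
        (pow_le_pow_of_le_one (by norm_num) (by norm_num) (j.le_add_left N))
    · rw [Set.indicator_of_notMem hωD]
      positivity
  obtain ⟨y, hy⟩ := hcomp v
    (dCauchy_of_le_geometric_two hn.NinfV_sub_self hn.NinfV_sub_comm hn.NinfV_sub_le hstep)
  refine ⟨y, ?_⟩
  have hTv : ∀ j, T (v j) = indL0 μ D hD • T (x (N + j)) := fun j => hT.2 _ _
  have hzy : indL0 μ D hD • z = T y := by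
    refine S.eq_of_tendsto_dist (w := fun j => T (v j)) ?_ ?_
    · refine squeeze_zero (fun j => S.dist_nonneg _ _) (fun j => ?_)
        (((tendsto_add_atTop_iff_nat N).2 hx).congr fun j => by rw [add_comm])
      rw [hTv, S.dist_comm (T _)]
      exact S.dist_indL0_smul_le hD _ _
    · refine squeeze_zero (fun j => S.dist_nonneg _ _) (fun j => S.dist_le_of_ae_le ?_) hy
      rw [← hT.map_sub, hTn]
      exact ae_le_NinfV (hn.mem_Linf _)
  rw [← hzy, smul_smul, indL0_mul_self]

/-- if `(E,‖·‖)` is a complete `L^∞`-normed module (complete in the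
`‖·‖_∞`-norm), then every element of its `L⁰`-extension `E₀` is a countable
concatenation of elements of `E`; that is, `E₀ = H⁰_cc(E)`. -/
theorem L0_extension_eq_Hcc_of_complete
    {Ω : Type} [MeasurableSpace Ω] (μ : Measure Ω) [IsProbabilityMeasure μ]
    {E : Type} [AddCommGroup E] [Module (Linf μ) E]
    (n : E → Ω →ₘ[μ] ℝ) (hn : IsLinfNorm μ n)
    (hcomp : dComplete (fun x y : E => NinfV μ (n (x - y))))
    (S : RNMod Ω μ) (T : E → S.carrier) (hext : IsL0Extension μ n S T) :
    ∀ z : S.carrier, ∃ (y : ℕ → E) (P : MPartition Ω),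
      ∀ k, P.ind μ k • z = P.ind μ k • T (y k) := by
  intro z
  obtain ⟨-, hT, hTn, hdense⟩ := hext
  choose x hx using fun m : ℕ => hdense z (4⁻¹ ^ m) (by positivity)
  have hxz : Tendsto (fun m => S.dist (T (x m)) z) atTop (nhds 0) :=
    squeeze_zero (fun m => S.dist_nonneg _ _) (fun m => (hx m).le)
      (tendsto_pow_atTop_nhds_zero_of_lt_one (by norm_num) (by norm_num))
  set B : ℕ → Set Ω := fun N => {ω | ∀ m ≥ N, |n (x m - x (m + 1)) ω| ≤ 2⁻¹ ^ m}
  have hB : ∀ N, MeasurableSet (B N) := fun N => by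
    simp only [B, Set.ofPred_forall]
    exact .iInter fun m => .iInter fun _ =>
      measurableSet_le (n _).measurable.abs measurable_const
  have hcover : ∀ᵐ ω ∂μ, ∃ N, ω ∈ B N := by
    filter_upwards [S.ae_eventually_abs_rnorm_sub_le hx] with ω hω
    simp only [← hT.map_sub, hTn] at hω
    exact eventually_atTop.1 hω
  obtain ⟨P, hP⟩ := exists_mpartition_ae_subset hB hcover
  choose y hy using fun k =>
    exists_indL0_smul_eq_smul_of_ae_abs_le hn hcomp S hT hTn hxz (P.meas k) (hP k)
  exact ⟨y, P, hy⟩
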